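/- Let P = N(m, σ²) be Gaussian with σ² > 0 and let F = {N(θ, (σ*)²) : θ ∈ ℝ} be a Gaussian location family with fixed variance (σ*)². With log-loss, the η̄-strong central condition (E_P[exp(-η̄(ℓ_θ - ℓ_{θ*}))] ≤ 1 for all θ) holds if and only if η̄ ≤ (σ*)²/σ², where θ* = m is the KL-optimal location parameter. -/

import Mathlib

open MeasureTheory Real ProbabilityTheory
open scoped NNReal

/-!
The excess log-loss `c ((y - θ)² - (y - m)²)` is affine in `y`, so its
exponential moment under `N(m, v)` is a value of the Gaussian moment generating function:
it equals `exp (c (θ - m)² (2 c v - 1))`. This is at most `1` for every `θ` exactly when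
`2 c v ≤ 1`, which for `c = η̄ / (2 σ*²)` and `v = σ²` reads `η̄ ≤ σ*² / σ²`.
-/

lemma integral_exp_affine_gaussianReal (μ : ℝ) (v : ℝ≥0) (a b : ℝ) :
    ∫ y, exp (a * y + b) ∂gaussianReal μ v = exp (μ * a + v * a ^ 2 / 2 + b) := by
  have hmgf : ∫ y, exp (a * y) ∂gaussianReal μ v = exp (μ * a + v * a ^ 2 / 2) :=
    congrFun (mgf_id_gaussianReal (μ := μ) (v := v)) a
  simp_rw [exp_add _ b, integral_mul_const, hmgf]

lemma integral_exp_excessSqLoss_gaussianReal (m θ c : ℝ) (v : ℝ≥0) :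
    ∫ y, exp (-c * ((y - θ) ^ 2 - (y - m) ^ 2)) ∂gaussianReal m v
      = exp (c * (θ - m) ^ 2 * (2 * c * v - 1)) := by
  have h_affine : ∀ y, -c * ((y - θ) ^ 2 - (y - m) ^ 2)
      = 2 * c * (θ - m) * y + -c * (θ ^ 2 - m ^ 2) := fun y ↦ by ring
  simp_rw [h_affine, integral_exp_affine_gaussianReal]
  ring_nf

lemma forall_integral_exp_excessSqLoss_le_one_iff (m c : ℝ) (hc : 0 < c) (v : ℝ≥0) :
    (∀ θ, ∫ y, exp (-c * ((y - θ) ^ 2 - (y - m) ^ 2)) ∂gaussianReal m v ≤ 1)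
      ↔ 2 * c * v ≤ 1 := by
  simp_rw [integral_exp_excessSqLoss_gaussianReal, exp_le_one_iff]
  constructor
  · intro h
    have h_unit := h (m + 1)
    rw [add_sub_cancel_left, one_pow, mul_one] at h_unit
    nlinarith
  · intro h θ
    exact mul_nonpos_of_nonneg_of_nonpos (by positivity) (by linarith)

/-- For `P = N(m, σ²)` and the Gaussian location family `{N(θ, σ*²) : θ ∈ ℝ}`
with log-loss `ℓ_θ(y) = (y-θ)²/(2σ*²) + log (σ* √(2π))` (so that the excess
loss is `ℓ_θ - ℓ_m = ((y-θ)² - (y-m)²)/(2σ*²)`, `θ* = m` being the KL-optimal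
location), the `η̄`-strong central condition holds iff `η̄ ≤ σ*²/σ²`. -/
theorem stmt2
    (m σ σs η : ℝ) (hσ : 0 < σ) (hσs : 0 < σs) (hη : 0 < η)
    (P : Measure ℝ) (hP : P = gaussianReal m (⟨σ ^ 2, by positivity⟩ : NNReal)) :
    (∀ θ : ℝ,
        ∫ y, Real.exp (-η * (((y - θ) ^ 2 - (y - m) ^ 2) / (2 * σs ^ 2))) ∂P ≤ 1)
      ↔ η ≤ σs ^ 2 / σ ^ 2 := by
  have h_loss : ∀ θ y : ℝ, -η * (((y - θ) ^ 2 - (y - m) ^ 2) / (2 * σs ^ 2))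
      = -(η / (2 * σs ^ 2)) * ((y - θ) ^ 2 - (y - m) ^ 2) := fun _ _ ↦ by ring
  subst hP
  simp only [h_loss]
  refine (forall_integral_exp_excessSqLoss_le_one_iff m _ (by positivity) _).trans ?_
  change 2 * (η / (2 * σs ^ 2)) * σ ^ 2 ≤ 1 ↔ _
  rw [le_div_iff₀ (by positivity), show 2 * (η / (2 * σs ^ 2)) * σ ^ 2 = η * σ ^ 2 / σs ^ 2 by
    field_simp, div_le_one (by positivity)]
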